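/- Let ν ≥ 0, h ≥ 0 and let g: ℝ → ℝ be a convex function satisfying −h ≤ g(z) ≤ ν|z| + h for all z ∈ ℝ. Then g is Lipschitz continuous with Lipschitz constant ν, i.e., |g(z₁) − g(z₂)| ≤ ν·|z₁ − z₂| for all z₁, z₂ ∈ ℝ. -/

import Mathlib

open Filter

/-- `(ν t + c)/(t - b) → ν` as `t → ∞`. -/
lemma stmt8_tend_aux (ν c b : ℝ) :
    Tendsto (fun t : ℝ => (ν * t + c) / (t - b)) atTop (nhds ν) := by
  have h1 : Tendsto (fun t : ℝ => t - b) atTop atTop :=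
    tendsto_atTop_add_const_right _ _ tendsto_id
  have h2 : Tendsto (fun t : ℝ => (ν * b + c) / (t - b)) atTop (nhds 0) := by
    simpa [div_eq_mul_inv] using h1.inv_tendsto_atTop.const_mul (ν * b + c)
  have h3 : Tendsto (fun t : ℝ => ν + (ν * b + c) / (t - b)) atTop (nhds (ν + 0)) :=
    tendsto_const_nhds.add h2
  rw [add_zero] at h3
  refine h3.congr' ?_
  filter_upwards [eventually_gt_atTop b] with t ht
  have : t - b ≠ 0 := by linarith
  field_simp
  ring

/-- Upper slope bound: for `a < b`, `(g b - g a)/(b - a) ≤ ν`. -/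
lemma stmt8_slope_le (ν h : ℝ) (hν : 0 ≤ ν) (hh : 0 ≤ h) (g : ℝ → ℝ)
    (hconv : ConvexOn ℝ Set.univ g)
    (hbd : ∀ z : ℝ, -h ≤ g z ∧ g z ≤ ν * |z| + h)
    {a b : ℝ} (hab : a < b) :
    (g b - g a) / (b - a) ≤ ν := by
  refine ge_of_tendsto (stmt8_tend_aux ν (h + h - g b) b) ?_
  filter_upwards [eventually_gt_atTop b, eventually_gt_atTop (0 : ℝ)] with t htb ht0
  have hslope := hconv.slope_mono_adjacent (Set.mem_univ a) (Set.mem_univ t) hab htb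
  have h1 : g t ≤ ν * t + h := by
    have := (hbd t).2
    rwa [abs_of_pos ht0] at this
  have h2 : -h ≤ g b := (hbd b).1
  have hden : 0 < t - b := by linarith
  calc (g b - g a) / (b - a) ≤ (g t - g b) / (t - b) := hslope
    _ ≤ (ν * t + (h + h - g b)) / (t - b) := by
        apply div_le_div_of_nonneg_right ?_ hden.le
        linarith

/-- Lower slope bound: for `a < b`, `-ν ≤ (g b - g a)/(b - a)`. -/
lemma stmt8_slope_ge (ν h : ℝ) (hν : 0 ≤ ν) (hh : 0 ≤ h) (g : ℝ → ℝ)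
    (hconv : ConvexOn ℝ Set.univ g)
    (hbd : ∀ z : ℝ, -h ≤ g z ∧ g z ≤ ν * |z| + h)
    {a b : ℝ} (hab : a < b) :
    -ν ≤ (g b - g a) / (b - a) := by
  have hconv' : ConvexOn ℝ Set.univ (fun x => g (-x)) := by
    refine ⟨convex_univ, ?_⟩
    intro x _ y _ p q hp hq hpq
    have := hconv.2 (Set.mem_univ (-x)) (Set.mem_univ (-y)) hp hq hpq
    have e : p • (-x) + q • (-y) = -(p • x + q • y) := by
      simp only [smul_eq_mul]; ring
    rw [e] at this
    exact this
  have hbd' : ∀ z : ℝ, -h ≤ g (-z) ∧ g (-z) ≤ ν * |z| + h := by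
    intro z
    refine ⟨(hbd (-z)).1, ?_⟩
    have := (hbd (-z)).2
    rwa [abs_neg] at this
  have key := stmt8_slope_le ν h hν hh (fun x => g (-x)) hconv' hbd'
    (a := -b) (b := -a) (by linarith)
  simp only [neg_neg] at key
  have hpos : 0 < b - a := by linarith
  rw [show -a - -b = b - a by ring] at key
  have key' : g a - g b ≤ ν * (b - a) := (div_le_iff₀ hpos).mp key
  rw [le_div_iff₀ hpos]
  linarith

/-- A convex function g : ℝ → ℝ with −h ≤ g(z) ≤ ν|z| + h is ν-Lipschitz. -/
theorem stmt8 (ν h : ℝ) (hν : 0 ≤ ν) (hh : 0 ≤ h) (g : ℝ → ℝ)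
    (hconv : ConvexOn ℝ Set.univ g)
    (hbd : ∀ z : ℝ, -h ≤ g z ∧ g z ≤ ν * |z| + h) :
    ∀ z₁ z₂ : ℝ, |g z₁ - g z₂| ≤ ν * |z₁ - z₂| := by
  have key : ∀ a b : ℝ, a < b → |g b - g a| ≤ ν * (b - a) := by
    intro a b hab
    have hpos : 0 < b - a := by linarith
    have h1 : g b - g a ≤ ν * (b - a) :=
      (div_le_iff₀ hpos).mp (stmt8_slope_le ν h hν hh g hconv hbd hab)
    have h2 : -ν * (b - a) ≤ g b - g a :=
      (le_div_iff₀ hpos).mp (stmt8_slope_ge ν h hν hh g hconv hbd hab)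
    rw [abs_le]
    constructor <;> nlinarith
  intro z₁ z₂
  rcases lt_trichotomy z₁ z₂ with hlt | heq | hgt
  · have := key z₁ z₂ hlt
    rw [abs_sub_comm, abs_of_neg (by linarith : z₁ - z₂ < 0)]
    simpa [neg_sub] using this
  · simp [heq]
  · have := key z₂ z₁ hgt
    rw [abs_of_pos (by linarith : 0 < z₁ - z₂)]
    simpa using this
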